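/- arXiv:1806.06039 — 3 statements merged into one kernel-verified Lean document; each statement's English description precedes it below -/
import Mathlib

section
/- Let A ∈ B^{n×n} and b ∈ B^n over the max-min algebra. The Bellman equation x = A ⊗ x ⊕ b always has a solution, and its solution set equals { A^* ⊗ b ⊕ v : v ∈ B^n, A ⊗ v = v }: every vector of the form A^* ⊗ b ⊕ v with A ⊗ v = v satisfies x = A ⊗ x ⊕ b, and conversely every solution x of x = A ⊗ x ⊕ b can be written as x = A^* ⊗ b ⊕ v for some v with A ⊗ v = v. -/
noncomputable section

/-- The max-min algebra: the unit interval `[0,1] ⊆ ℝ` with `⊕ = max = ⊔` and `⊗ = min = ⊓`. -/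
abbrev B : Type := unitInterval

instance : Fact ((0:ℝ) ≤ 1) := ⟨zero_le_one⟩

/-- Max-min matrix-vector product: `(A ⊗ x)_i = max_j min (A i j) (x j)`. -/
def mmVec {α β : Type*} (A : Matrix α β B) (x : β → B) : α → B :=
  fun i => ⨆ j, A i j ⊓ x j

/-- Max-min matrix-matrix product. -/
def mmMul {α β γ : Type*} (A : Matrix α β B) (C : Matrix β γ B) : Matrix α γ B :=
  fun i k => ⨆ j, A i j ⊓ C j k

/-- The max-min identity matrix. -/
def mmId (α : Type*) [DecidableEq α] : Matrix α α B :=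
  fun i j => if i = j then 1 else 0

/-- Max-min matrix powers, `A^0 = I`. -/
def mmPow {α : Type*} [DecidableEq α] (A : Matrix α α B) : ℕ → Matrix α α B
  | 0 => mmId α
  | k + 1 => mmMul A (mmPow A k)

/-- The metric matrix `A⁺ = A ⊕ A² ⊕ ... ⊕ Aⁿ`. -/
def mmPlus {α : Type*} [Fintype α] [DecidableEq α] (A : Matrix α α B) : Matrix α α B :=
  fun i j => ⨆ k ∈ Finset.Icc 1 (Fintype.card α), mmPow A k i j

/-- The Kleene star `A* = I ⊕ A ⊕ ... ⊕ A^{n-1}`. -/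
def mmStar {α : Type*} [Fintype α] [DecidableEq α] (A : Matrix α α B) : Matrix α α B :=
  fun i j => ⨆ k ∈ Finset.range (Fintype.card α), mmPow A k i j

/-!
A^* ⊗ b is the least solution of the Bellman equation: it solves it because Aⁿ ≤ A^* (a walk
of length n revisits a vertex, and cutting out the cycle gives a shorter walk of at least the
same weight), and it lies below every x with A ⊗ x ⊕ b ≤ x. Conversely, if x is a solution, let
y agree with x where x exceeds A^* ⊗ b and vanish elsewhere. Then x = A^* ⊗ b ⊕ y, and since
x ≤ A^* ⊗ b ⊕ A ⊗ y in the chain [0,1], also y ≤ A ⊗ y. The greatest fixed point of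
z ↦ x ⊓ A ⊗ z is then a fixed point v of A ⊗ · with y ≤ v ≤ x, so x = A^* ⊗ b ⊕ v.
-/

open Finset

variable {α β γ : Type*}

section MatrixVector

lemma mmVec_mono (A : Matrix α β B) : Monotone (mmVec A) :=
  fun _ _ hxy _ => iSup_mono fun j => inf_le_inf_left _ (hxy j)

lemma mmVec_sup (A : Matrix α β B) (x y : β → B) :
    mmVec A (x ⊔ y) = mmVec A x ⊔ mmVec A y := by
  funext i
  simp only [mmVec, Pi.sup_apply, inf_sup_left, iSup_sup_eq]

lemma mmVec_iSup {ι : Sort*} (A : Matrix α β B) (f : ι → β → B) :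
    mmVec A (⨆ k, f k) = ⨆ k, mmVec A (f k) := by
  funext i
  simp only [mmVec, iSup_apply, inf_iSup_eq]
  exact iSup_comm

lemma mmVec_mmMul (A : Matrix α β B) (C : Matrix β γ B) (x : γ → B) :
    mmVec (mmMul A C) x = mmVec A (mmVec C x) := by
  funext i
  simp only [mmVec, mmMul, iSup_inf_eq, inf_iSup_eq, inf_assoc]
  exact iSup_comm

lemma mmVec_mmId [DecidableEq α] (x : α → B) : mmVec (mmId α) x = x := by
  funext i
  refine le_antisymm (iSup_le fun j => ?_) (le_iSup_of_le i ?_)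
  · by_cases h : i = j
    · subst h; exact inf_le_right
    · simp [mmId, h]
  · simp only [mmId]
    exact le_inf le_top le_rfl

variable [DecidableEq α]

lemma mmVec_mmPow_zero (A : Matrix α α B) (x : α → B) : mmVec (mmPow A 0) x = x :=
  mmVec_mmId x

lemma mmVec_mmPow_succ (A : Matrix α α B) (k : ℕ) (x : α → B) :
    mmVec (mmPow A (k + 1)) x = mmVec A (mmVec (mmPow A k) x) :=
  mmVec_mmMul _ _ _

lemma mmVec_mmStar [Fintype α] (A : Matrix α α B) (b : α → B) :
    mmVec (mmStar A) b = ⨆ k ∈ range (Fintype.card α), mmVec (mmPow A k) b := by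
  funext i
  simp only [mmVec, mmStar, iSup_apply, iSup_inf_eq]
  rw [iSup_comm]
  exact iSup_congr fun _ => iSup_comm

end MatrixVector

section Walks

lemma exists_lt_le_card_eq [Fintype α] (w : ℕ → α) :
    ∃ s t, s < t ∧ t ≤ Fintype.card α ∧ w s = w t := by
  obtain ⟨a, c, hne, heq⟩ :=
    Fintype.exists_ne_map_eq_of_card_lt (fun r : Fin (Fintype.card α + 1) => w r) (by simp)
  rcases lt_or_gt_of_ne (Fin.val_ne_of_ne hne) with h | h
  · exact ⟨a, c, h, Nat.lt_succ_iff.mp c.isLt, heq⟩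
  · exact ⟨c, a, h, Nat.lt_succ_iff.mp a.isLt, heq.symm⟩

def walkWeight (A : Matrix α α B) (w : ℕ → α) (k : ℕ) : B :=
  ⨅ t < k, A (w t) (w (t + 1))

lemma walkWeight_le_shift (A : Matrix α α B) (w : ℕ → α) {a l k : ℕ} (h : a + l ≤ k) :
    walkWeight A w k ≤ walkWeight A (fun r => w (a + r)) l :=
  le_iInf₂ fun r hr => iInf₂_le (a + r) (by omega)

variable [DecidableEq α]

lemma walkWeight_le_mmPow (A : Matrix α α B) (k : ℕ) (w : ℕ → α) :
    walkWeight A w k ≤ mmPow A k (w 0) (w k) := by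
  induction k generalizing w with
  | zero =>
    rw [mmPow, mmId, if_pos rfl]
    exact le_top
  | succ k ih =>
    have hhead : walkWeight A w (k + 1) ≤ A (w 0) (w 1) := iInf₂_le 0 k.succ_pos
    have htail : walkWeight A w (k + 1) ≤ walkWeight A (fun r => w (r + 1)) k :=
      le_iInf₂ fun r hr => iInf₂_le (r + 1) (by omega)
    exact le_iSup_of_le (w 1) (le_inf hhead (htail.trans (ih _)))

lemma mmPow_le_iSup_walkWeight (A : Matrix α α B) (k : ℕ) (i j : α) :
    mmPow A k i j ≤ ⨆ (w : ℕ → α) (_ : w 0 = i) (_ : w k = j), walkWeight A w k := by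
  induction k generalizing i with
  | zero =>
    by_cases h : i = j
    · subst h
      exact le_iSup_of_le (fun _ => i) (le_iSup_of_le rfl (le_iSup_of_le rfl
        (le_iInf₂ fun _ h => absurd h (Nat.not_lt_zero _))))
    · simp [mmPow, mmId, h]
  | succ k ih =>
    refine iSup_le fun m => ?_
    refine (inf_le_inf_left _ (ih m)).trans ?_
    simp only [inf_iSup_eq]
    refine iSup_le fun w => iSup_le fun hw0 => iSup_le fun hwk => ?_
    let w' : ℕ → α := fun r => Nat.casesOn r i w
    refine le_iSup_of_le w' (le_iSup_of_le rfl (le_iSup_of_le hwk ?_))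
    refine le_iInf₂ fun r hr => ?_
    cases r with
    | zero => exact hw0 ▸ inf_le_left
    | succ r => exact inf_le_right.trans (iInf₂_le r (by omega))

lemma mmPow_inf_mmPow_le (A : Matrix α α B) (a c : ℕ) (i m j : α) :
    mmPow A a i m ⊓ mmPow A c m j ≤ mmPow A (a + c) i j := by
  induction a generalizing i with
  | zero =>
    by_cases h : i = m
    · subst h; simp [mmPow, mmId]
    · simp [mmPow, mmId, h]
  | succ a ih =>
    rw [Nat.add_right_comm]
    refine (iSup_inf_eq _ _).trans_le (iSup_mono fun l => ?_)
    rw [inf_assoc]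
    exact inf_le_inf_left _ (ih l)

lemma mmPow_card_le_mmStar [Fintype α] (A : Matrix α α B) (i j : α) :
    mmPow A (Fintype.card α) i j ≤ mmStar A i j := by
  set n := Fintype.card α
  refine (mmPow_le_iSup_walkWeight A n i j).trans
    (iSup_le fun w => iSup_le fun hi => iSup_le fun hj => ?_)
  obtain ⟨s, t, hst, htn, hw⟩ := exists_lt_le_card_eq w
  have hprefix : walkWeight A w n ≤ mmPow A s i (w s) := by
    simpa [hi] using (walkWeight_le_shift A w (a := 0) (l := s) (k := n) (by omega)).trans
      (walkWeight_le_mmPow A s _)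
  have hsuffix : walkWeight A w n ≤ mmPow A (n - t) (w s) j := by
    have :=
      (walkWeight_le_shift A w (a := t) (l := n - t) (k := n)
        (by omega)).trans (walkWeight_le_mmPow A (n - t) _)
    rwa [add_zero, Nat.add_sub_cancel' htn, hj, ← hw] at this
  calc walkWeight A w n ≤ mmPow A (s + (n - t)) i j :=
        (le_inf hprefix hsuffix).trans (mmPow_inf_mmPow_le A s (n - t) i (w s) j)
    _ ≤ mmStar A i j := le_iSup₂_of_le (s + (n - t)) (mem_range.2 (by omega)) le_rfl

end Walks

lemma exists_mmVec_eq_self_between {A : Matrix α α B} {x y : α → B} (hy : y ≤ mmVec A y)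
    (hyx : y ≤ x) (hx : mmVec A x ≤ x) : ∃ v, mmVec A v = v ∧ y ≤ v ∧ v ≤ x := by
  let f : (α → B) →o (α → B) :=
    ⟨fun z => x ⊓ mmVec A z, fun _ _ h => inf_le_inf_left x (mmVec_mono A h)⟩
  have hv : x ⊓ mmVec A f.gfp = f.gfp := f.map_gfp
  have hvx : f.gfp ≤ x := hv.ge.trans inf_le_left
  have hvAv : f.gfp ≤ mmVec A f.gfp := hv.ge.trans inf_le_right
  have hAv : mmVec A f.gfp ≤ f.gfp :=
    f.le_gfp (le_inf ((mmVec_mono A hvx).trans hx) (mmVec_mono A hvAv))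
  exact ⟨f.gfp, le_antisymm hAv hvAv, f.le_gfp (le_inf hyx hy), hvx⟩

section Bellman

variable [Fintype α] [DecidableEq α]

lemma mmVec_mmStar_le {A : Matrix α α B} {b y : α → B} (hb : b ≤ y) (hy : mmVec A y ≤ y) :
    mmVec (mmStar A) b ≤ y := by
  have hpow : ∀ k, mmVec (mmPow A k) b ≤ y := by
    intro k
    induction k with
    | zero => rwa [mmVec_mmPow_zero]
    | succ k ih => rw [mmVec_mmPow_succ]; exact (mmVec_mono A ih).trans hy
  rw [mmVec_mmStar]
  exact iSup₂_le fun k _ => hpow k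

lemma mmVec_mmPow_le_mmVec_mmStar (A : Matrix α α B) (b : α → B) {k : ℕ}
    (hk : k ≤ Fintype.card α) : mmVec (mmPow A k) b ≤ mmVec (mmStar A) b := by
  rcases hk.lt_or_eq with hk | rfl
  · rw [mmVec_mmStar]
    exact le_iSup₂_of_le k (mem_range.2 hk) le_rfl
  · exact fun i => iSup_mono fun j => inf_le_inf_right _ (mmPow_card_le_mmStar A i j)

lemma mmVec_mmStar_sup_eq (A : Matrix α α B) (b : α → B) :
    mmVec A (mmVec (mmStar A) b) ⊔ b = mmVec (mmStar A) b := by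
  have hb : b ≤ mmVec (mmStar A) b :=
    (mmVec_mmPow_zero A b).ge.trans (mmVec_mmPow_le_mmVec_mmStar A b (Nat.zero_le _))
  have hAc : mmVec A (mmVec (mmStar A) b) ≤ mmVec (mmStar A) b := by
    conv_lhs => rw [mmVec_mmStar]
    simp only [mmVec_iSup, ← mmVec_mmPow_succ]
    exact iSup₂_le fun k hk => mmVec_mmPow_le_mmVec_mmStar A b (mem_range.1 hk)
  refine le_antisymm (sup_le hAc hb) (mmVec_mmStar_le le_sup_right ?_)
  rw [mmVec_sup]
  exact le_sup_of_le_left (sup_le (mmVec_mono A hAc) (mmVec_mono A hb))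

lemma exists_fixed_eq_mmVec_mmStar_sup {A : Matrix α α B} {b x : α → B}
    (hx : x = mmVec A x ⊔ b) : ∃ v, mmVec A v = v ∧ x = mmVec (mmStar A) b ⊔ v := by
  set c := mmVec (mmStar A) b
  have hc : mmVec A c ⊔ b = c := mmVec_mmStar_sup_eq A b
  have hAx : mmVec A x ≤ x := le_sup_left.trans hx.ge
  have hcx : c ≤ x := mmVec_mmStar_le (le_sup_right.trans hx.ge) hAx
  let y : α → B := fun i => if c i < x i then x i else 0
  have hyx : y ≤ x := fun i => by
    by_cases h : c i < x i
    · simp [y, h]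
    · simp only [y, if_neg h]; exact bot_le
  have hxy : x ≤ c ⊔ y := fun i => by
    by_cases h : c i < x i
    · simp [y, h]
    · exact le_sup_of_le_left (not_lt.1 h)
  have hxAy : x ≤ c ⊔ mmVec A y := calc
    x = mmVec A x ⊔ b := hx
    _ ≤ mmVec A (c ⊔ y) ⊔ b := sup_le_sup_right (mmVec_mono A hxy) b
    _ = c ⊔ mmVec A y := by rw [mmVec_sup, sup_right_comm, hc]
  have hyAy : y ≤ mmVec A y := fun i => by
    by_cases h : c i < x i
    · simp only [y, if_pos h]
      exact (le_sup_iff.1 (hxAy i)).resolve_left (not_le.2 h)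
    · simp only [y, if_neg h]; exact bot_le
  obtain ⟨v, hAv, hyv, hvx⟩ := exists_mmVec_eq_self_between hyAy hyx hAx
  exact ⟨v, hAv, le_antisymm (hxy.trans (sup_le_sup_left hyv c)) (sup_le hcx hvx)⟩

theorem eq_mmVec_sup_iff {A : Matrix α α B} {b x : α → B} :
    x = mmVec A x ⊔ b ↔ ∃ v, mmVec A v = v ∧ x = mmVec (mmStar A) b ⊔ v := by
  refine ⟨exists_fixed_eq_mmVec_mmStar_sup, ?_⟩
  rintro ⟨v, hv, rfl⟩
  rw [mmVec_sup, hv, sup_right_comm, mmVec_mmStar_sup_eq]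

end Bellman

/-- The Bellman equation `x = A ⊗ x ⊕ b` always has a solution, and its
solution set is `{ A* ⊗ b ⊕ v : A ⊗ v = v }`. -/
theorem stmt4 {n : ℕ} (A : Matrix (Fin n) (Fin n) B) (b : Fin n → B) :
    (∃ x : Fin n → B, x = fun i => mmVec A x i ⊔ b i) ∧
    (∀ x : Fin n → B,
      (x = fun i => mmVec A x i ⊔ b i) ↔
        ∃ v : Fin n → B, mmVec A v = v ∧ x = fun i => mmVec (mmStar A) b i ⊔ v i) :=
  ⟨⟨_, (mmVec_mmStar_sup_eq A b).symm⟩, fun _ => eq_mmVec_sup_iff⟩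
end
end

section
/- Let A ∈ B^{m×n}, b ∈ B^m and λ ∈ B over the max-min algebra, with a_{ij} ≤ λ and b_i ≤ λ for all i, j. The equation A ⊗ z ⊕ b = λ·1 is solvable if and only if there exists W ⊆ {1,...,n} with I_0 = ∪_{j∈W} C_j (a covering of I_0). In that case the solution set equals ∪_W { z ∈ B^n : z^W ≤ z ≤ 1 }, where the union is over all W ⊆ {1,...,n} such that C^W is a minimal covering of I_0. -/
noncomputable section

/-!
A solution `z` of `A ⊗ z ⊕ b = λ·1` must reach `λ` in every row `i ∈ I₀`, and since `A ≤ λ`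
this happens exactly through a column `j` with `a_{ij} = λ` and `z_j ≥ λ`. Hence `z` is a
solution iff the set `{j : z_j ≥ λ}` indexes a covering of `I₀`. Coverings are closed under
enlarging the index set, and every covering contains a minimal one; a box `z^W ≤ z ≤ 1` is
precisely the set of `z` with `W ⊆ {j : z_j ≥ λ}`.
-/

open Finset

section
variable {α β : Type*} (A : Matrix α β B) (b : α → B) (lam : B)

def IsCovering (W : Finset β) : Prop :=
  {i | b i < lam} = ⋃ j ∈ W, {i | b i < lam ∧ A i j = lam}

variable {A b lam}

lemma isCovering_iff {W : Finset β} :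
    IsCovering A b lam W ↔ ∀ i, b i < lam → ∃ j ∈ W, A i j = lam := by
  simp only [IsCovering, Set.ext_iff, Set.mem_ofPred_eq, Set.mem_iUnion, exists_prop]
  grind

lemma IsCovering.mono {W V : Finset β} (hW : IsCovering A b lam W) (hWV : W ⊆ V) :
    IsCovering A b lam V := by
  rw [isCovering_iff] at hW ⊢
  intro i hi
  obtain ⟨j, hjW, hj⟩ := hW i hi
  exact ⟨j, hWV hjW, hj⟩

lemma le_mmVec_iff [Fintype β] {z : β → B} {i : α} (hlam : ⊥ < lam) :
    lam ≤ mmVec A z i ↔ ∃ j, lam ≤ A i j ∧ lam ≤ z j := by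
  simp [mmVec, ← Finset.sup_univ_eq_iSup, Finset.le_sup_iff hlam]

lemma mmVec_le (hA : ∀ i j, A i j ≤ lam) (z : β → B) (i : α) : mmVec A z i ≤ lam :=
  iSup_le fun j => inf_le_left.trans (hA i j)

lemma mmVec_sup_eq_iff [Fintype β] (hA : ∀ i j, A i j ≤ lam) (hb : ∀ i, b i ≤ lam)
    (z : β → B) :
    (∀ i, mmVec A z i ⊔ b i = lam) ↔ ∀ i, b i < lam → ∃ j, A i j = lam ∧ lam ≤ z j := by
  refine forall_congr' fun i => ?_
  rw [le_antisymm_iff, and_iff_right (sup_le (mmVec_le hA z i) (hb i)), le_sup_iff]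
  rcases (hb i).lt_or_eq with hi | hi
  · simp only [hi, true_implies, hi.not_ge, or_false, le_mmVec_iff (bot_le.trans_lt hi),
      (hA i _).ge_iff_eq]
  · simp [hi]

lemma mmVec_sup_eq_iff_isCovering [Fintype β]
    (hA : ∀ i j, A i j ≤ lam) (hb : ∀ i, b i ≤ lam) (z : β → B) :
    (∀ i, mmVec A z i ⊔ b i = lam) ↔ IsCovering A b lam ({j | lam ≤ z j} : Finset β) := by
  simp only [mmVec_sup_eq_iff hA hb, isCovering_iff, mem_filter, mem_univ, true_and]
  grind

lemma forall_ite_le_and_le_one_iff [Fintype β] [DecidableEq β] {W : Finset β} {z : β → B} :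
    (∀ j, (if j ∈ W then lam else 0) ≤ z j ∧ z j ≤ 1) ↔ W ⊆ ({j | lam ≤ z j} : Finset β) := by
  simp only [subset_iff, unitInterval.le_one', and_true]
  refine forall_congr' fun j => ?_
  split_ifs with h <;> simp [h]

end

/-- With all entries of `A` and `b` at most `λ`: the equation
`A ⊗ z ⊕ b = λ·1` is solvable iff there is a covering `C^W` of `I₀`; in that case the
solution set is the union of the boxes `{z : z^W ≤ z ≤ 1}` over all `W` such that `C^W`
is a minimal covering of `I₀`. -/
theorem stmt6 {m n : ℕ} (A : Matrix (Fin m) (Fin n) B) (b : Fin m → B) (lam : B)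
    (hA : ∀ i j, A i j ≤ lam) (hb : ∀ i, b i ≤ lam) :
    ((∃ z : Fin n → B, ∀ i, mmVec A z i ⊔ b i = lam) ↔
      ∃ W : Finset (Fin n),
        {i | b i < lam} = ⋃ j ∈ W, {i | b i < lam ∧ A i j = lam}) ∧
    ((∃ W : Finset (Fin n),
        {i | b i < lam} = ⋃ j ∈ W, {i | b i < lam ∧ A i j = lam}) →
      ∀ z : Fin n → B,
        (∀ i, mmVec A z i ⊔ b i = lam) ↔
          ∃ W : Finset (Fin n),
            ({i | b i < lam} = ⋃ j ∈ W, {i | b i < lam ∧ A i j = lam}) ∧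
            (∀ V ⊆ W, V ≠ W →
              {i | b i < lam} ≠ ⋃ j ∈ V, {i | b i < lam ∧ A i j = lam}) ∧
            (∀ j, (if j ∈ W then lam else 0) ≤ z j ∧ z j ≤ 1)) := by
  have hsol := mmVec_sup_eq_iff_isCovering hA hb
  refine ⟨⟨fun ⟨z, hz⟩ => ⟨_, (hsol z).1 hz⟩, fun ⟨W, hW⟩ => ?_⟩, fun _ z => ⟨fun hz => ?_, ?_⟩⟩
  · refine ⟨fun j => if j ∈ W then lam else 0, (hsol _).2 (IsCovering.mono hW ?_)⟩
    exact forall_ite_le_and_le_one_iff.1 fun j => ⟨le_rfl, unitInterval.le_one'⟩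
  · obtain ⟨W, hWz, hWmin⟩ := exists_minimal_le_of_wellFoundedLT _ _ ((hsol z).1 hz)
    exact ⟨W, hWmin.prop, fun V hVW hVW' => hWmin.not_prop_of_lt (hVW.ssubset_of_ne hVW'),
      forall_ite_le_and_le_one_iff.2 hWz⟩
  · rintro ⟨W, hW, -, hbox⟩
    exact (hsol z).2 (IsCovering.mono hW (forall_ite_le_and_le_one_iff.1 hbox))
end
end

section
/- Let A ∈ B^{n×n}, λ ∈ B, K, L a partition of N = {1,...,n}, L_1 = { i ∈ L : max_{j∈L} a_{ij} ≥ λ }, L^{>λ,L_1} = { k ∈ L : max_{i∈L_1} a_{ik} > λ }, L^{>λ,K} = { ℓ ∈ L : max_{k∈K} ((A_{KK})^* ⊗ A_{KL})_{kℓ} > λ }, L' = L^{>λ,L_1} ∪ L^{>λ,K} and L̃ = L \ L'. Then the set of vectors x_L ∈ B^L satisfying x_L ≥ λ·1_L, A_{L_1 L} ⊗ x_L = λ·1_{L_1}, and (A_{KK})^* ⊗ A_{KL} ⊗ x_L ≤ λ·1_K equals S_L(λ) = { x_L : x_ℓ = λ for ℓ ∈ L', λ ≤ x_ℓ ≤ 1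 for ℓ ∈ L̃ } = { λ·1_L ⊕ Λ_{L,L̃} ⊗ z : z ∈ B^{|L̃|} }, where Λ ∈ B^{n×n} has Λ_{ii} = 1 and Λ_{ij} = λ for i ≠ j, and Λ_{L,L̃} is its submatrix with rows in L and columns in L̃. -/
noncomputable section

/-- Submatrix of `A` with rows in `P` and columns in `Q`. -/
def subM {n : ℕ} (A : Matrix (Fin n) (Fin n) B) (P Q : Finset (Fin n)) :
    Matrix ↥P ↥Q B :=
  fun i j => A i j

/-- Subvector of `x` indexed by `P`. -/
def subV {n : ℕ} (x : Fin n → B) (P : Finset (Fin n)) : ↥P → B :=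
  fun i => x i

/-- `x` is a `(K,L)` `λ`-eigenvector of `A`: `A ⊗ x = λ ⊗ x`, `x_i ≤ λ` for `i ∈ K`,
`x_i ≥ λ` for `i ∈ L`. -/
def IsKLEig {n : ℕ} (A : Matrix (Fin n) (Fin n) B) (lam : B) (K L : Finset (Fin n))
    (x : Fin n → B) : Prop :=
  mmVec A x = (fun i => lam ⊓ x i) ∧ (∀ i ∈ K, x i ≤ lam) ∧ (∀ i ∈ L, lam ≤ x i)

/-- `L₁ = {i ∈ L : max_{j∈L} a_{ij} ≥ λ}`. -/
def L1set {n : ℕ} (A : Matrix (Fin n) (Fin n) B) (lam : B) (L : Finset (Fin n)) :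
    Finset (Fin n) :=
  L.filter fun i => lam ≤ ⨆ j ∈ L, A i j

/-- `L₂ = {i ∈ L : max_{j∈L} a_{ij} < λ}`. -/
def L2set {n : ℕ} (A : Matrix (Fin n) (Fin n) B) (lam : B) (L : Finset (Fin n)) :
    Finset (Fin n) :=
  L.filter fun i => (⨆ j ∈ L, A i j) < lam

/-- `L^{>λ,L₁} = {k ∈ L : max_{i ∈ L₁} a_{ik} > λ}`. -/
def LgtL1set {n : ℕ} (A : Matrix (Fin n) (Fin n) B) (lam : B) (L : Finset (Fin n)) :
    Finset (Fin n) :=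
  L.filter fun k => lam < ⨆ i ∈ L1set A lam L, A i k

/-- `L^{>λ,K} = {ℓ ∈ L : max_{k ∈ K} ((A_{KK})* ⊗ A_{KL})_{kℓ} > λ}`. (The matrix
`(A_{KK})* ⊗ A_{K,N}` has, for `ℓ ∈ L`, exactly the same entries in column `ℓ` as
`(A_{KK})* ⊗ A_{KL}`.) -/
def LgtKset {n : ℕ} (A : Matrix (Fin n) (Fin n) B) (lam : B) (K L : Finset (Fin n)) :
    Finset (Fin n) :=
  L.filter fun ℓ =>
    lam < ⨆ k : ↥K, mmMul (mmStar (subM A K K)) (fun (p : ↥K) (q : Fin n) => A p q) k ℓ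

/-- `L' = L^{>λ,L₁} ∪ L^{>λ,K}`. -/
def LprimeSet {n : ℕ} (A : Matrix (Fin n) (Fin n) B) (lam : B) (K L : Finset (Fin n)) :
    Finset (Fin n) :=
  LgtL1set A lam L ∪ LgtKset A lam K L

/-- `L̃ = L \ L'`. -/
def LtilSet {n : ℕ} (A : Matrix (Fin n) (Fin n) B) (lam : B) (K L : Finset (Fin n)) :
    Finset (Fin n) :=
  L \ LprimeSet A lam K L

/-- The submatrix `Λ_{P,Q}` of the matrix `Λ` with `Λ_{ii} = 1` and `Λ_{ij} = λ` for `i ≠ j`. -/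
def LamSub {n : ℕ} (lam : B) (P Q : Finset (Fin n)) : Matrix ↥P ↥Q B :=
  fun p q => if (p : Fin n) = (q : Fin n) then 1 else lam

/-! Over a complete linear order, `⨆ⱼ mᵢⱼ ⊓ xⱼ ≤ λ` for all `i` says exactly that `xⱼ ≤ λ`
whenever column `j` of `M` has an entry above `λ`; and since every row of `A_{L₁L}` has
maximum `≥ λ`, the reverse inequality on `L₁` is automatic once `x_L ≥ λ`. Hence, given
`x_L ≥ λ`, the system forces `x_ℓ = λ` precisely on `L'` and leaves the coordinates in `L̃`
free in `[λ, 1]`; the map `z ↦ λ ⊕ Λ_{L,L̃} ⊗ z` sets coordinate `ℓ` to `λ ⊔ z_ℓ` on `L̃`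
and to `λ` elsewhere. -/

section Lattice

variable {ι κ α : Type*}

theorem iSup_inf_le_iff [CompleteLinearOrder α] {f g : ι → α} {c : α} :
    ⨆ j, f j ⊓ g j ≤ c ↔ ∀ j, c < f j → g j ≤ c := by
  simp only [iSup_le_iff, inf_le_iff, or_iff_not_imp_left, not_le]

theorem forall_iSup_inf_le_iff [CompleteLinearOrder α] {M : ι → κ → α} {x : κ → α} {c : α} :
    (∀ i, ⨆ j, M i j ⊓ x j ≤ c) ↔ ∀ j, c < ⨆ i, M i j → x j ≤ c := by
  simp only [iSup_inf_le_iff, lt_iSup_iff, forall_exists_index]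
  exact forall_comm

theorem le_iSup_inf_of_le [Order.Frame α] {f g : ι → α} {c : α} (hf : c ≤ ⨆ j, f j)
    (hg : ∀ j, c ≤ g j) : c ≤ ⨆ j, f j ⊓ g j :=
  calc c ≤ (⨆ j, f j) ⊓ c := le_inf hf le_rfl
    _ = ⨆ j, f j ⊓ c := iSup_inf_eq f c
    _ ≤ ⨆ j, f j ⊓ g j := iSup_mono fun j => inf_le_inf_left _ (hg j)

end Lattice

section MaxMin

variable {α β : Type*}

theorem forall_mmVec_le_iff {M : Matrix α β B} {x : β → B} {c : B} :
    (∀ i, mmVec M x i ≤ c) ↔ ∀ j, c < ⨆ i, M i j → x j ≤ c :=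
  forall_iSup_inf_le_iff

theorem le_mmVec_of_le {M : Matrix α β B} {x : β → B} {c : B} {i : α} (hM : c ≤ ⨆ j, M i j)
    (hx : ∀ j, c ≤ x j) : c ≤ mmVec M x i :=
  le_iSup_inf_of_le hM hx

theorem le_and_le_on_iff_eq_on_and_mem_Icc_off {p : α → Prop} {x : α → B} {c : B} :
    ((∀ i, c ≤ x i) ∧ ∀ i, p i → x i ≤ c) ↔
      (∀ i, p i → x i = c) ∧ ∀ i, ¬p i → c ≤ x i ∧ x i ≤ 1 := by
  constructor
  · rintro ⟨hle, hp⟩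
    exact ⟨fun i hi => le_antisymm (hp i hi) (hle i), fun i _ => ⟨hle i, unitInterval.le_one'⟩⟩
  · rintro ⟨hp, hnp⟩
    refine ⟨fun i => ?_, fun i hi => (hp i hi).le⟩
    by_cases hi : p i
    · exact (hp i hi).ge
    · exact (hnp i hi).1

end MaxMin

section LamSub

variable {n : ℕ} {c : B} {P Q : Finset (Fin n)}

theorem sup_mmVec_LamSub (z : ↥Q → B) (ℓ : ↥P) :
    c ⊔ mmVec (LamSub c P Q) z ℓ = if h : (ℓ : Fin n) ∈ Q then c ⊔ z ⟨ℓ, h⟩ else c := by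
  unfold mmVec LamSub
  split_ifs with h
  · refine le_antisymm (sup_le le_sup_left (iSup_le fun q => ?_)) ?_
    · split_ifs with hq
      · obtain rfl : q = ⟨ℓ, h⟩ := Subtype.ext hq.symm
        exact le_sup_of_le_right inf_le_right
      · exact le_sup_of_le_left inf_le_left
    · exact sup_le_sup_left (le_iSup_of_le (⟨ℓ, h⟩ : ↥Q) (by rw [if_pos rfl]; exact le_inf unitInterval.le_one' le_rfl)) c
  · refine sup_eq_left.mpr (iSup_le fun q => ?_)
    rw [if_neg fun hq : (ℓ : Fin n) = q => h (hq ▸ q.2)]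
    exact inf_le_left

theorem exists_eq_sup_mmVec_LamSub_iff (hQP : Q ⊆ P) {x : ↥P → B} :
    (∃ z, x = fun ℓ => c ⊔ mmVec (LamSub c P Q) z ℓ) ↔
      (∀ ℓ, c ≤ x ℓ) ∧ ∀ ℓ : ↥P, (ℓ : Fin n) ∉ Q → x ℓ ≤ c := by
  simp_rw [sup_mmVec_LamSub]
  constructor
  · rintro ⟨z, rfl⟩
    refine ⟨fun ℓ => ?_, fun ℓ hℓ => by simp [hℓ]⟩
    dsimp only
    split_ifs
    exacts [le_sup_left, le_rfl]
  · rintro ⟨hle, hout⟩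
    refine ⟨fun q => x ⟨q, hQP q.2⟩, funext fun ℓ => ?_⟩
    split_ifs with h
    · exact (sup_eq_right.mpr (hle ℓ)).symm
    · exact le_antisymm (hout ℓ h) (hle ℓ)

end LamSub

section Partition

variable {n : ℕ} (A : Matrix (Fin n) (Fin n) B) (lam : B) (K L : Finset (Fin n))

def IsLBlockSolution (xL : ↥L → B) : Prop :=
  (∀ i, lam ≤ xL i) ∧
    (∀ i : ↥(L1set A lam L), mmVec (subM A (L1set A lam L) L) xL i = lam) ∧
    (∀ i : ↥K, mmVec (mmMul (mmStar (subM A K K)) (subM A K L)) xL i ≤ lam)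

theorem le_iSup_subM_L1set (i : ↥(L1set A lam L)) :
    lam ≤ ⨆ j, subM A (L1set A lam L) L i j := by
  have hi := (Finset.mem_filter.mp i.2).2
  rwa [iSup_subtype'] at hi

theorem coe_mem_LprimeSet_iff (ℓ : ↥L) :
    (ℓ : Fin n) ∈ LprimeSet A lam K L ↔
      lam < ⨆ i, subM A (L1set A lam L) L i ℓ ∨
        lam < ⨆ k, mmMul (mmStar (subM A K K)) (subM A K L) k ℓ := by
  simp only [LprimeSet, LgtL1set, LgtKset, Finset.mem_union, Finset.mem_filter, ℓ.2, true_and]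
  rw [iSup_subtype']
  rfl

theorem coe_mem_LtilSet_iff (ℓ : ↥L) :
    (ℓ : Fin n) ∈ LtilSet A lam K L ↔ (ℓ : Fin n) ∉ LprimeSet A lam K L := by
  simp [LtilSet, ℓ.2]

theorem isLBlockSolution_iff (xL : ↥L → B) :
    IsLBlockSolution A lam K L xL ↔
      (∀ ℓ, lam ≤ xL ℓ) ∧ ∀ ℓ : ↥L, (ℓ : Fin n) ∈ LprimeSet A lam K L → xL ℓ ≤ lam := by
  refine and_congr_right fun hx => ?_
  have hL1 : (∀ i, mmVec (subM A (L1set A lam L) L) xL i = lam) ↔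
      ∀ i, mmVec (subM A (L1set A lam L) L) xL i ≤ lam :=
    forall_congr' fun i =>
      ⟨le_of_eq, fun h => le_antisymm h (le_mmVec_of_le (le_iSup_subM_L1set A lam L i) hx)⟩
  rw [hL1, forall_mmVec_le_iff, forall_mmVec_le_iff, ← forall_and]
  simp only [coe_mem_LprimeSet_iff, or_imp]

end Partition

theorem stmt15_general {n : ℕ} (A : Matrix (Fin n) (Fin n) B) (lam : B) (K L : Finset (Fin n))
    (xL : ↥L → B) :
    (((∀ i, lam ≤ xL i) ∧
      (∀ i : ↥(L1set A lam L), mmVec (subM A (L1set A lam L) L) xL i = lam) ∧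
      (∀ i : ↥K, mmVec (mmMul (mmStar (subM A K K)) (subM A K L)) xL i ≤ lam)) ↔
        ((∀ ℓ : ↥L, (ℓ : Fin n) ∈ LprimeSet A lam K L → xL ℓ = lam) ∧
         (∀ ℓ : ↥L, (ℓ : Fin n) ∈ LtilSet A lam K L → lam ≤ xL ℓ ∧ xL ℓ ≤ 1))) ∧
    (((∀ i, lam ≤ xL i) ∧
      (∀ i : ↥(L1set A lam L), mmVec (subM A (L1set A lam L) L) xL i = lam) ∧
      (∀ i : ↥K, mmVec (mmMul (mmStar (subM A K K)) (subM A K L)) xL i ≤ lam)) ↔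
        ∃ z : ↥(LtilSet A lam K L) → B,
          xL = fun ℓ => lam ⊔ mmVec (LamSub lam L (LtilSet A lam K L)) z ℓ) := by
  have hsol := isLBlockSolution_iff A lam K L xL
  have hprime : ∀ ℓ : ↥L, (ℓ : Fin n) ∈ LprimeSet A lam K L ↔ (ℓ : Fin n) ∉ LtilSet A lam K L :=
    fun ℓ => by rw [coe_mem_LtilSet_iff, not_not]
  refine ⟨hsol.trans ?_, hsol.trans ?_⟩
  · simpa only [coe_mem_LtilSet_iff] using le_and_le_on_iff_eq_on_and_mem_Icc_off
  · simp only [hprime]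
    exact (exists_eq_sup_mmVec_LamSub_iff Finset.sdiff_subset).symm

/-- The set of vectors `x_L ≥ λ·1_L` with `A_{L₁L} ⊗ x_L = λ·1_{L₁}` and
`(A_{KK})* ⊗ A_{KL} ⊗ x_L ≤ λ·1_K` equals
`S_L(λ) = {x_L : x_ℓ = λ for ℓ ∈ L', λ ≤ x_ℓ ≤ 1 for ℓ ∈ L̃}`, which equals
`{λ·1_L ⊕ Λ_{L,L̃} ⊗ z : z ∈ B^{|L̃|}}`. -/
theorem stmt15 {n : ℕ} (A : Matrix (Fin n) (Fin n) B) (lam : B) (K L : Finset (Fin n))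
    (hU : K ∪ L = Finset.univ) (hD : Disjoint K L) (xL : ↥L → B) :
    (((∀ i, lam ≤ xL i) ∧
      (∀ i : ↥(L1set A lam L), mmVec (subM A (L1set A lam L) L) xL i = lam) ∧
      (∀ i : ↥K, mmVec (mmMul (mmStar (subM A K K)) (subM A K L)) xL i ≤ lam)) ↔
        ((∀ ℓ : ↥L, (ℓ : Fin n) ∈ LprimeSet A lam K L → xL ℓ = lam) ∧
         (∀ ℓ : ↥L, (ℓ : Fin n) ∈ LtilSet A lam K L → lam ≤ xL ℓ ∧ xL ℓ ≤ 1))) ∧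
    (((∀ i, lam ≤ xL i) ∧
      (∀ i : ↥(L1set A lam L), mmVec (subM A (L1set A lam L) L) xL i = lam) ∧
      (∀ i : ↥K, mmVec (mmMul (mmStar (subM A K K)) (subM A K L)) xL i ≤ lam)) ↔
        ∃ z : ↥(LtilSet A lam K L) → B,
          xL = fun ℓ => lam ⊔ mmVec (LamSub lam L (LtilSet A lam K L)) z ℓ) :=
  stmt15_general A lam K L xL
end
end
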